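/- arXiv:2201.10397 — 2 statements merged into one kernel-verified Lean document; each statement's English description precedes it below -/
import Mathlib

section
/- Consider the discrete forward-Euler low rank update f^{n+1,*} = f^n − Δt (D_x f^n diag(v) + diag(E) f^n D_vᵀ) on ℝ^{N_x×N_v}, where D_x is in periodic flux-difference form and D_v satisfies the discrete summation-by-parts/consistency condition D_vᵀ 1_v = 0, so that h_v (f D_vᵀ) 1_v = 0. Then the discrete charge density ρ^{n+1,*} = h_v f^{n+1,*} 1_v satisfies ρ^{n+1,*} = ρ^n − Δt D_x J^n where J^n = h_v f^n v, and consequently the total charge Σᵢ ρ^{n+1,*}ᵢ = Σᵢ ρ^nᵢ. -/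
/-- Forward-Euler low rank update: the discrete charge density satisfies
ρ^{n+1,*} = ρⁿ - Δt D_x Jⁿ, and total charge is conserved, provided D_x is in
periodic flux-difference form and the velocity operator's column sums vanish. -/
theorem stmt8 (nx nv : ℕ) [NeZero nx] (hv Δt : ℝ)
    (Dx Fx : Matrix (ZMod nx) (ZMod nx) ℝ)
    (hDx : ∀ u i, Dx.mulVec u i = Fx.mulVec u i - Fx.mulVec u (i - 1))
    (Dv : Matrix (Fin nv) (Fin nv) ℝ)
    (hDv : ∀ k, ∑ j, Dv j k = 0)
    (v : Fin nv → ℝ) (E : ZMod nx → ℝ)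
    (f fnew : Matrix (ZMod nx) (Fin nv) ℝ)
    (hfnew : fnew = f - Δt • (Dx * f * Matrix.diagonal v + Matrix.diagonal E * f * Dv.transpose))
    (ρ ρnew J : ZMod nx → ℝ)
    (hρ : ρ = fun i => hv * ∑ j, f i j)
    (hρnew : ρnew = fun i => hv * ∑ j, fnew i j)
    (hJ : J = fun i => hv * ∑ j, f i j * v j) :
    (ρnew = fun i => ρ i - Δt * Dx.mulVec J i) ∧ (∑ i, ρnew i = ∑ i, ρ i) := by
  have key : ρnew = fun i => ρ i - Δt * Dx.mulVec J i := by
    funext i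
    have h1 : ∑ j, (Dx * f * Matrix.diagonal v) i j = ∑ k, Dx i k * ∑ j, f k j * v j := by
      have he : ∀ j, (Dx * f * Matrix.diagonal v) i j = (∑ k, Dx i k * f k j) * v j := by
        intro j; rw [Matrix.mul_diagonal]; simp [Matrix.mul_apply]
      simp only [he, Finset.sum_mul, Finset.mul_sum]
      rw [Finset.sum_comm]
      simp [mul_assoc]
    have h2 : ∑ j, (Matrix.diagonal E * f * Dv.transpose) i j = 0 := by
      simp only [Matrix.mul_apply, Matrix.diagonal_mul, Matrix.transpose_apply]
      rw [Finset.sum_comm]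
      simp only [← Finset.mul_sum]
      rw [Finset.sum_congr rfl (fun k _ => by rw [hDv k, mul_zero])]
      simp
    have hmv : Dx.mulVec J i = hv * ∑ k, Dx i k * ∑ j, f k j * v j := by
      simp only [hJ, Matrix.mulVec, dotProduct, Finset.mul_sum]
      exact Finset.sum_congr rfl fun k _ => Finset.sum_congr rfl fun j _ => by ring
    simp only [hρnew, hρ, hfnew, Matrix.sub_apply, Matrix.smul_apply, Matrix.add_apply,
      smul_eq_mul, Finset.sum_sub_distrib, ← Finset.mul_sum, Finset.sum_add_distrib, h1, h2,
      hmv]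
    ring
  refine ⟨key, ?_⟩
  rw [key]
  have hshift : ∑ i, Dx.mulVec J i = 0 := by
    simp only [hDx, Finset.sum_sub_distrib]
    rw [Fintype.sum_equiv (Equiv.subRight (1 : ZMod nx)) (fun i => Fx.mulVec J (i - 1))
      (fun i => Fx.mulVec J i) (fun i => rfl)]
    simp
  simp [Finset.sum_sub_distrib, ← Finset.mul_sum, hshift]
end

section
/- Under the same discrete setting, if additionally the velocity-differentiation matrix D_v satisfies the summation-by-parts identity ⟨D_v u, v⟩ = −⟨u, 1_v⟩ for all u ∈ ℝ^{N_v} vanishing at the velocity boundary, then the discrete current density satisfies J^{n+1,*} = J^n − Δt (D_x σ^n − ρ^n ⋆ E^n), where σ^n = h_v f^n v² is the discrete second moment; i.e., the moment scheme is a consistent conservative discretization of the momentum equation ∂_t J + ∂_x σ = ρE. -/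
/-! Take the `v`-moment of the forward-Euler update row by row. The transport term
`D_x f diag(v)` has moment `D_x (f (v ⋆ v)) = D_x σ / h_v`, since `D_x` acts on the other
index. The moment of the field term is `E ⋆ ⟨D_v fᵢ, v⟩`, and summation by parts, valid
because every row `fᵢ` vanishes at the velocity boundary, turns this into `-E ⋆ ρ / h_v`. -/

open Matrix

section

variable {l m n k R : Type*} [Fintype m] [Fintype n] [Fintype k] [CommSemiring R]

theorem Matrix.mul_mul_diagonal_mulVec_self [DecidableEq n] (A : Matrix l m R)
    (f : Matrix m n R) (v : n → R) :
    (A * f * diagonal v) *ᵥ v = A *ᵥ f *ᵥ (v * v) := by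
  rw [← mulVec_mulVec, ← mulVec_mulVec,
    show diagonal v *ᵥ v = v * v from funext (mulVec_diagonal v v)]

theorem Matrix.diagonal_mul_mul_transpose_mulVec [DecidableEq m] (E : m → R)
    (f : Matrix m n R) (D : Matrix k n R) (v : k → R) :
    (diagonal E * f * Dᵀ) *ᵥ v = E * fun i => D *ᵥ f i ⬝ᵥ v := by
  funext i
  rw [← mulVec_mulVec, ← mulVec_mulVec, mulVec_diagonal, Pi.mul_apply]
  exact congrArg (E i * ·) ((dotProduct_mulVec (f i) Dᵀ v).trans (by rw [vecMul_transpose]))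

end

theorem stmt9_general (nx nv : ℕ) [NeZero nx] (hv Δt : ℝ)
    (Dx : Matrix (ZMod nx) (ZMod nx) ℝ)
    (Dv : Matrix (Fin (nv + 1)) (Fin (nv + 1)) ℝ)
    (v : Fin (nv + 1) → ℝ) (E : ZMod nx → ℝ)
    (hSBP : ∀ u : Fin (nv + 1) → ℝ, u 0 = 0 → u (Fin.last nv) = 0 →
      hv * ∑ j, Dv.mulVec u j * v j = -(hv * ∑ j, u j * 1))
    (f fnew : Matrix (ZMod nx) (Fin (nv + 1)) ℝ)
    (hbd : ∀ i, f i 0 = 0 ∧ f i (Fin.last nv) = 0)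
    (hfnew : fnew = f - Δt • (Dx * f * Matrix.diagonal v + Matrix.diagonal E * f * Dv.transpose))
    (ρ J Jnew σ : ZMod nx → ℝ)
    (hρ : ρ = fun i => hv * ∑ j, f i j)
    (hJ : J = fun i => hv * ∑ j, f i j * v j)
    (hJnew : Jnew = fun i => hv * ∑ j, fnew i j * v j)
    (hσ : σ = fun i => hv * ∑ j, f i j * (v j) ^ 2) :
    Jnew = fun i => J i - Δt * (Dx.mulVec σ i - ρ i * E i) := by
  have hσ_eq : σ = hv • f *ᵥ (v * v) := by
    subst hσ; funext i; simp [mulVec, dotProduct, Finset.mul_sum, sq]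
  have hmoment :
      fnew *ᵥ v = f *ᵥ v - Δt • (Dx *ᵥ f *ᵥ (v * v) + E * fun i => Dv *ᵥ f i ⬝ᵥ v) := by
    rw [hfnew, sub_mulVec, smul_mulVec, add_mulVec, mul_mul_diagonal_mulVec_self,
      diagonal_mul_mul_transpose_mulVec]
  subst hρ hJ hJnew
  funext i
  have hsbp := hSBP (f i) (hbd i).1 (hbd i).2
  have hmoment_i := congrFun hmoment i
  rw [hσ_eq, mulVec_smul]
  simp only [mulVec, dotProduct, Pi.sub_apply, Pi.smul_apply, Pi.add_apply, Pi.mul_apply,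
    smul_eq_mul, mul_one] at hmoment_i hsbp ⊢
  linear_combination hv * hmoment_i - Δt * E i * hsbp

/-- Forward-Euler low rank update: under a summation-by-parts identity for D_v
(for vectors vanishing at the velocity boundary), the discrete current density
satisfies J^{n+1,*} = Jⁿ - Δt (D_x σⁿ - ρⁿ ⋆ Eⁿ). -/
theorem stmt9 (nx nv : ℕ) [NeZero nx] (hv Δt : ℝ)
    (Dx Fx : Matrix (ZMod nx) (ZMod nx) ℝ)
    (hDx : ∀ u i, Dx.mulVec u i = Fx.mulVec u i - Fx.mulVec u (i - 1))
    (Dv : Matrix (Fin (nv + 1)) (Fin (nv + 1)) ℝ)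
    (v : Fin (nv + 1) → ℝ) (E : ZMod nx → ℝ)
    (hSBP : ∀ u : Fin (nv + 1) → ℝ, u 0 = 0 → u (Fin.last nv) = 0 →
      hv * ∑ j, Dv.mulVec u j * v j = -(hv * ∑ j, u j * 1))
    (f fnew : Matrix (ZMod nx) (Fin (nv + 1)) ℝ)
    (hbd : ∀ i, f i 0 = 0 ∧ f i (Fin.last nv) = 0)
    (hfnew : fnew = f - Δt • (Dx * f * Matrix.diagonal v + Matrix.diagonal E * f * Dv.transpose))
    (ρ J Jnew σ : ZMod nx → ℝ)
    (hρ : ρ = fun i => hv * ∑ j, f i j)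
    (hJ : J = fun i => hv * ∑ j, f i j * v j)
    (hJnew : Jnew = fun i => hv * ∑ j, fnew i j * v j)
    (hσ : σ = fun i => hv * ∑ j, f i j * (v j) ^ 2) :
    Jnew = fun i => J i - Δt * (Dx.mulVec σ i - ρ i * E i) :=
  stmt9_general nx nv hv Δt Dx Dv v E hSBP f fnew hbd hfnew ρ J Jnew σ hρ hJ hJnew hσ
end
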